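/- For every set 𝔚 of bracket patterns, the union of the completions of the members of the bracket pattern category generated by 𝔚 equals the union of the completions of the members of 𝔚: ⋃ A(⟪𝔚⟫) = ⋃ A(𝔚). -/
import Mathlib


/-- The frame of a bracket pattern: its maximum (sup). -/
def frame (w : Finset ℕ) : ℕ := w.sup id

/-- The dual of a bracket pattern: `w† = { ‖w‖ - i : i ∈ ℕ₀, i < ‖w‖, i ∉ w }`. -/
def dual (w : Finset ℕ) : Finset ℕ :=
  ((Finset.range (frame w)).filter (fun i => i ∉ w)).image (fun i => frame w - i)

/-- The completion of a bracket pattern: `A(w) = { j - i : j ∈ w, i ∈ ℕ₀, i ∉ w, i < j }`. -/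
def completion (w : Finset ℕ) : Finset ℕ :=
  w.biUnion (fun j => ((Finset.range j).filter (fun i => i ∉ w)).image (fun i => j - i))

/-- The `j`-projection of a bracket pattern: `∩_j w = { i ∈ w : i ≤ j }`. -/
def proj (j : ℕ) (w : Finset ℕ) : Finset ℕ := w.filter (fun i => i ≤ j)

/-- A bracket pattern is a nonempty finite subset of ℕ = {1,2,...}. -/
def IsBracketPattern (w : Finset ℕ) : Prop := w.Nonempty ∧ 0 ∉ w

/-- A bracket pattern category: a set of bracket patterns closed under
superposition (union), dualisation and projections. -/
def IsBPCategory (W : Set (Finset ℕ)) : Prop :=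
  (∀ w ∈ W, IsBracketPattern w) ∧
  (∀ w ∈ W, ∀ w' ∈ W, w ∪ w' ∈ W) ∧
  (∀ w ∈ W, dual w ∈ W) ∧
  (∀ w ∈ W, ∀ j ∈ w, proj j w ∈ W)

/-- The bracket pattern category generated by a set of bracket patterns. -/
def genBP (S : Set (Finset ℕ)) : Set (Finset ℕ) :=
  ⋂₀ {W | IsBPCategory W ∧ S ⊆ W}

lemma mem_completion {a : ℕ} {w : Finset ℕ} :
    a ∈ completion w ↔ ∃ j ∈ w, ∃ i, i < j ∧ i ∉ w ∧ j - i = a := by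
  simp [completion, and_assoc]

lemma mem_dual {k : ℕ} {w : Finset ℕ} :
    k ∈ dual w ↔ ∃ i, i < frame w ∧ i ∉ w ∧ frame w - i = k := by
  simp [dual, and_assoc]

lemma le_frame {i : ℕ} {w : Finset ℕ} (h : i ∈ w) : i ≤ frame w :=
  Finset.le_sup (f := id) h

lemma frame_mem {w : Finset ℕ} (h : w.Nonempty) : frame w ∈ w := by
  obtain ⟨b, hb, hb'⟩ := Finset.exists_mem_eq_sup w h id
  simpa [frame, hb'] using hb

lemma mem_dual' {k : ℕ} {w : Finset ℕ} (h0 : 0 ∉ w) :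
    k ∈ dual w ↔ 1 ≤ k ∧ k ≤ frame w ∧ frame w - k ∉ w := by
  rw [mem_dual]
  constructor
  · rintro ⟨i, hi, hiw, rfl⟩
    refine ⟨by omega, by omega, ?_⟩
    have : frame w - (frame w - i) = i := by omega
    rw [this]; exact hiw
  · rintro ⟨h1, h2, h3⟩
    exact ⟨frame w - k, by omega, h3, by omega⟩

lemma bp_dual {w : Finset ℕ} (h : IsBracketPattern w) : IsBracketPattern (dual w) := by
  obtain ⟨hne, h0⟩ := h
  have hf : 1 ≤ frame w := by
    obtain ⟨b, hb⟩ := hne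
    have := le_frame hb
    have : b ≠ 0 := fun hb0 => h0 (hb0 ▸ hb)
    omega
  constructor
  · exact ⟨frame w, (mem_dual' h0).2 ⟨hf, le_rfl, by simpa using h0⟩⟩
  · intro hc
    rw [mem_dual' h0] at hc
    omega

lemma completion_dual {w : Finset ℕ} (h : IsBracketPattern w) :
    completion (dual w) = completion w := by
  obtain ⟨hne, h0⟩ := h
  have hfw : frame w ∈ w := frame_mem hne
  ext a
  rw [mem_completion, mem_completion]
  constructor
  · rintro ⟨j', hj', i', hlt, hi', rfl⟩
    rw [mem_dual' h0] at hj'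
    obtain ⟨hj1, hj2, hj3⟩ := hj'
    rcases Nat.eq_zero_or_pos i' with rfl | hi'pos
    · exact ⟨frame w, hfw, frame w - j', by omega, hj3, by omega⟩
    · have hi'w : frame w - i' ∈ w := by
        by_contra hc
        exact hi' ((mem_dual' h0).2 ⟨hi'pos, by omega, hc⟩)
      exact ⟨frame w - i', hi'w, frame w - j', by omega, hj3, by omega⟩
  · rintro ⟨j, hj, i, hlt, hi, rfl⟩
    have hjf : j ≤ frame w := le_frame hj
    refine ⟨frame w - i, (mem_dual' h0).2 ⟨by omega, by omega, by
      have : frame w - (frame w - i) = i := by omega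
      rw [this]; exact hi⟩, frame w - j, by omega, ?_, by omega⟩
    rcases Nat.eq_zero_or_pos (frame w - j) with he | hp
    · rw [he]; intro hc
      rw [mem_dual' h0] at hc
      omega
    · intro hc
      rw [mem_dual' h0] at hc
      have : frame w - (frame w - j) = j := by omega
      rw [this] at hc
      exact hc.2.2 hj

lemma completion_union {w w' : Finset ℕ} :
    completion (w ∪ w') ⊆ completion w ∪ completion w' := by
  intro a ha
  rw [mem_completion] at ha
  obtain ⟨j, hj, i, hlt, hi, rfl⟩ := ha
  rw [Finset.mem_union] at hj
  simp only [Finset.mem_union] at hi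
  push_neg at hi
  rcases hj with hj | hj
  · exact Finset.mem_union_left _ (mem_completion.2 ⟨j, hj, i, hlt, hi.1, rfl⟩)
  · exact Finset.mem_union_right _ (mem_completion.2 ⟨j, hj, i, hlt, hi.2, rfl⟩)

lemma completion_proj {j : ℕ} {w : Finset ℕ} (hj : j ∈ w) :
    completion (proj j w) ⊆ completion w := by
  intro a ha
  rw [mem_completion] at ha
  obtain ⟨j', hj', i, hlt, hi, rfl⟩ := ha
  rw [proj, Finset.mem_filter] at hj'
  refine mem_completion.2 ⟨j', hj'.1, i, hlt, fun hc => hi ?_, rfl⟩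
  exact Finset.mem_filter.2 ⟨hc, by omega⟩

theorem union_completion_genBP (S : Set (Finset ℕ))
    (hS : ∀ w ∈ S, IsBracketPattern w) :
    (⋃ w ∈ genBP S, (completion w : Set ℕ)) = ⋃ w ∈ S, (completion w : Set ℕ) := by
  set U : Set ℕ := ⋃ w ∈ S, (completion w : Set ℕ) with hU
  set W : Set (Finset ℕ) := {w | IsBracketPattern w ∧ (completion w : Set ℕ) ⊆ U} with hW
  have hcat : IsBPCategory W := by
    refine ⟨fun w hw => hw.1, ?_, ?_, ?_⟩
    · rintro w ⟨⟨hne, h0⟩, hc⟩ w' ⟨⟨hne', h0'⟩, hc'⟩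
      refine ⟨⟨hne.mono Finset.subset_union_left, by simp [h0, h0']⟩, ?_⟩
      intro a ha
      rcases Finset.mem_union.1 (completion_union ha) with h | h
      · exact hc h
      · exact hc' h
    · rintro w ⟨hbp, hc⟩
      exact ⟨bp_dual hbp, by rw [completion_dual hbp]; exact hc⟩
    · rintro w ⟨⟨hne, h0⟩, hc⟩ j hj
      refine ⟨⟨⟨j, Finset.mem_filter.2 ⟨hj, le_rfl⟩⟩, fun hc0 => h0 (Finset.mem_filter.1 hc0).1⟩, ?_⟩
      intro a ha
      exact hc (completion_proj hj ha)
  have hSW : S ⊆ W := by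
    intro w hw
    refine ⟨hS w hw, ?_⟩
    intro a ha
    exact Set.mem_biUnion hw ha
  apply Set.Subset.antisymm
  · intro a ha
    obtain ⟨w, hw, haw⟩ := Set.mem_iUnion₂.1 ha
    exact hw W ⟨hcat, hSW⟩ |>.2 haw
  · intro a ha
    obtain ⟨w, hw, haw⟩ := Set.mem_iUnion₂.1 ha
    exact Set.mem_iUnion₂.2 ⟨w, fun V hV => hV.2 hw, haw⟩
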